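/- arXiv:0802.2035 — 2 statements merged into one kernel-verified Lean document; each statement's English description precedes it below -/
import Mathlib

section
/- Let G be a group containing an infinite cyclic subgroup of index 2 (i.e., a subgroup of index 2 that is isomorphic to ℤ). Then G is isomorphic to ℤ, to ℤ × ℤ/2, or to the free product ℤ/2 * ℤ/2 of two copies of the cyclic group of order 2. -/
/-!
Let `H = ⟨h⟩` have index two and pick `t ∉ H`. Since `H` is normal, conjugation by `t` is an
automorphism of `H ≅ ℤ`, so `t h t⁻¹ = h` or `t h t⁻¹ = h⁻¹`, and `t² = hᵐ` for some `m`.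
If `t` commutes with `h`, replacing `t` by `h⁻ᵏ t` with `m = 2k` or `m = 2k + 1` gives an element
outside `H` commuting with `h` whose square is `1` (then `G ≅ ℤ × ℤ/2`) or `h` (then `G ≅ ℤ`).
If `t` inverts `h`, then `t` also inverts `t² = hᵐ`, forcing `m = 0`; so `G` is generated by the two
involutions `t` and `t h`, and `G` is the infinite dihedral group `ℤ/2 * ℤ/2`.
-/

open Function Multiplicative Subgroup

lemma Multiplicative.eq_one_or_eq_ofAdd_one (e : Multiplicative (ZMod 2)) :
    e = 1 ∨ e = ofAdd 1 := by
  revert e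
  decide

section ZModTwo

variable {M : Type*} [Monoid M]

def zmodTwoHom (x : M) (hx : x ^ 2 = 1) : Multiplicative (ZMod 2) →* M where
  toFun e := x ^ e.toAdd.val
  map_one' := pow_zero x
  map_mul' e f := by
    rw [toAdd_mul, ZMod.val_add, ← pow_eq_pow_mod _ hx, pow_add]

@[simp]
lemma zmodTwoHom_ofAdd_one (x : M) (hx : x ^ 2 = 1) : zmodTwoHom x hx (ofAdd 1) = x :=
  pow_one x

lemma MonoidHom.ext_zmodTwo {f g : Multiplicative (ZMod 2) →* M}
    (h : f (ofAdd 1) = g (ofAdd 1)) : f = g := by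
  refine MonoidHom.ext fun e => ?_
  rcases e.eq_one_or_eq_ofAdd_one with rfl | rfl
  · rw [map_one, map_one]
  · exact h

end ZModTwo

lemma mul_mul_zpow_eq_zpow_neg_mul {G : Type*} [Group G] {x y : G} (hx : x ^ 2 = 1)
    (hy : y ^ 2 = 1) (i : ℤ) : x * (x * y) ^ i = (x * y) ^ (-i) * x := by
  have hsemi : SemiconjBy x (x * y) (x * y)⁻¹ := by
    rw [SemiconjBy, mul_inv_rev, inv_eq_of_mul_eq_one_right ((sq x).symm.trans hx),
      inv_eq_of_mul_eq_one_right ((sq y).symm.trans hy), ← mul_assoc, mul_assoc y, ← sq, hx,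
      one_mul, mul_one]
  rw [zpow_neg, ← inv_zpow]
  exact (hsemi.zpow_right i).eq

namespace DihedralGroup

variable {G : Type*} [Group G] {x y : G}

lemma sr_sq {n : ℕ} (i : ZMod n) : sr i ^ 2 = 1 :=
  (sq (sr i)).trans (sr_mul_self i)

/-- The map `sr 0 ↦ x`, `sr 1 ↦ y`; it is forced by `r 1 = sr 0 * sr 1` and `sr i = sr 0 * r i`.
Here `ZMod 0` is `ℤ` by definition. -/
def liftOfInvolutions (x y : G) (hx : x ^ 2 = 1) (hy : y ^ 2 = 1) : DihedralGroup 0 →* G where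
  toFun
    | r i => (x * y) ^ (show ℤ from i)
    | sr i => x * (x * y) ^ (show ℤ from i)
  map_one' := zpow_zero _
  map_mul' := by
    have hxx : x * x = 1 := (sq x).symm.trans hx
    rintro (i | i) (j | j) <;> change ℤ at i j
    · exact zpow_add _ _ _
    · show x * (x * y) ^ (j - i) = (x * y) ^ i * (x * (x * y) ^ j)
      rw [← mul_assoc, ← neg_neg i, ← mul_mul_zpow_eq_zpow_neg_mul hx hy, neg_neg,
        sub_eq_neg_add, zpow_add, mul_assoc]
    · show x * (x * y) ^ (i + j) = x * (x * y) ^ i * (x * y) ^ j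
      rw [zpow_add, mul_assoc]
    · show (x * y) ^ (j - i) = x * (x * y) ^ i * (x * (x * y) ^ j)
      rw [mul_mul_zpow_eq_zpow_neg_mul hx hy, mul_assoc, ← mul_assoc x, hxx, one_mul,
        sub_eq_neg_add, zpow_add]

@[simp]
lemma liftOfInvolutions_r (hx : x ^ 2 = 1) (hy : y ^ 2 = 1) (i : ℤ) :
    liftOfInvolutions x y hx hy (r i) = (x * y) ^ i :=
  rfl

@[simp]
lemma liftOfInvolutions_sr (hx : x ^ 2 = 1) (hy : y ^ 2 = 1) (i : ℤ) :
    liftOfInvolutions x y hx hy (sr i) = x * (x * y) ^ i :=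
  rfl

noncomputable def zeroMulEquivCoprod :
    DihedralGroup 0 ≃* Monoid.Coprod (Multiplicative (ZMod 2)) (Multiplicative (ZMod 2)) :=
  have hsq (e : Multiplicative (ZMod 2)) : e ^ 2 = 1 := by
    revert e
    decide
  have ha : (Monoid.Coprod.inl (ofAdd 1) :
      Monoid.Coprod (Multiplicative (ZMod 2)) (Multiplicative (ZMod 2))) ^ 2 = 1 := by
    rw [← map_pow, hsq, map_one]
  have hb : (Monoid.Coprod.inr (ofAdd 1) :
      Monoid.Coprod (Multiplicative (ZMod 2)) (Multiplicative (ZMod 2))) ^ 2 = 1 := by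
    rw [← map_pow, hsq, map_one]
  MonoidHom.toMulEquiv (liftOfInvolutions _ _ ha hb)
    (Monoid.Coprod.lift (zmodTwoHom (sr 0) (sr_sq 0)) (zmodTwoHom (sr 1) (sr_sq 1)))
    (by
      refine MonoidHom.ext ?_
      rintro (i | i) <;> change ℤ at i
      · simp only [MonoidHom.coe_comp, comp_apply, liftOfInvolutions_r, map_zpow, map_mul,
          Monoid.Coprod.lift_apply_inl, Monoid.Coprod.lift_apply_inr, zmodTwoHom_ofAdd_one,
          sr_mul_sr, sub_zero, r_zpow, one_mul, MonoidHom.id_apply]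
        rfl
      · simp only [MonoidHom.coe_comp, comp_apply, liftOfInvolutions_sr, map_zpow, map_mul,
          Monoid.Coprod.lift_apply_inl, Monoid.Coprod.lift_apply_inr, zmodTwoHom_ofAdd_one,
          sr_mul_sr, sub_zero, r_zpow, one_mul, sr_mul_r, zero_add, MonoidHom.id_apply]
        rfl)
    (by
      refine Monoid.Coprod.hom_ext (MonoidHom.ext_zmodTwo ?_) (MonoidHom.ext_zmodTwo ?_)
      · exact (liftOfInvolutions_sr ha hb 0).trans (by rw [zpow_zero, mul_one]; rfl)
      · refine (liftOfInvolutions_sr ha hb 1).trans ?_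
        rw [zpow_one, ← mul_assoc, ← sq, ha, one_mul]
        rfl)

end DihedralGroup

section IndexTwo

variable {G : Type*} [Group G]

theorem exists_zpowers_eq_of_mulEquiv_int {H : Subgroup G} (e : H ≃* Multiplicative ℤ) :
    ∃ h : G, zpowers h = H ∧ ¬IsOfFinOrder h := by
  set f : Multiplicative ℤ →* G := H.subtype.comp e.symm.toMonoidHom
  have hf : f = zpowersHom G (f (ofAdd 1)) := MonoidHom.ext_mint (by simp)
  have hinj : Injective f := Subtype.val_injective.comp e.symm.injective
  refine ⟨f (ofAdd 1), ?_, ?_⟩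
  · rw [← range_zpowersHom, ← hf, MonoidHom.range_comp,
      MonoidHom.range_eq_top.mpr e.symm.surjective, ← MonoidHom.range_eq_map, range_subtype]
  · rw [hf] at hinj
    exact injective_zpow_iff_not_isOfFinOrder.mp (hinj.comp ofAdd.injective)

theorem injective_zpowersHom {g : G} (hg : ¬IsOfFinOrder g) : Injective (zpowersHom G g) :=
  (injective_zpow_iff_not_isOfFinOrder.mpr hg).comp toAdd.injective

theorem Subgroup.eq_top_of_index_eq_two_of_le {H K : Subgroup G} (hH : H.index = 2) (hHK : H ≤ K)
    {x : G} (hxK : x ∈ K) (hxH : x ∉ H) : K = ⊤ := by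
  refine eq_top_iff.mpr fun y _ => ?_
  by_cases hy : y ∈ H
  · exact hHK hy
  · have : x⁻¹ * y ∈ H :=
      (mul_mem_iff_of_index_two hH).mpr (iff_of_false (inv_mem_iff.not.mpr hxH) hy)
    simpa using K.mul_mem hxK (hHK this)

theorem MonoidHom.surjective_of_index_eq_two {M : Type*} [Group M] (f : M →* G) {H : Subgroup G}
    (hH : H.index = 2) (hHf : H ≤ f.range) {x : G} (hx : x ∈ f.range) (hxH : x ∉ H) :
    Surjective f :=
  range_eq_top.mp (eq_top_of_index_eq_two_of_le hH hHf hx hxH)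

theorem conj_eq_self_or_inv {h : G} (hh : ¬IsOfFinOrder h) [(zpowers h).Normal] (t : G) :
    t * h * t⁻¹ = h ∨ t * h * t⁻¹ = h⁻¹ := by
  have hgen : zpowers h = zpowers (t * h * t⁻¹) := by
    have := MonoidHom.map_zpowers (MulAut.conj t : G →* G) h
    rwa [Normal.map_conj_eq] at this
  exact ((zpowers_eq_zpowers_iff hh).mp hgen).imp Eq.symm Eq.symm

theorem sq_eq_one_of_conj_eq_inv {h t : G} (hh : ¬IsOfFinOrder h) (hth : t * h * t⁻¹ = h⁻¹)
    (ht2 : t ^ 2 ∈ zpowers h) : t ^ 2 = 1 := by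
  obtain ⟨m, hm⟩ := mem_zpowers_iff.mp ht2
  have hconj : h ^ m = h ^ (-m) := calc
    h ^ m = t * t ^ 2 * t⁻¹ := by rw [← pow_succ', pow_succ, mul_inv_cancel_right, hm]
    _ = (t * h * t⁻¹) ^ m := by rw [← hm, conj_zpow]
    _ = h ^ (-m) := by rw [hth, inv_zpow, zpow_neg]
  have hm0 : m = 0 := by
    have := injective_zpow_iff_not_isOfFinOrder.mpr hh hconj
    omega
  rw [← hm, hm0, zpow_zero]

theorem exists_commute_sq_eq_one_or_self {h t : G} (hth : Commute t h) (ht : t ∉ zpowers h)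
    (ht2 : t ^ 2 ∈ zpowers h) : ∃ s ∉ zpowers h, Commute s h ∧ (s ^ 2 = 1 ∨ s ^ 2 = h) := by
  obtain ⟨m, hm⟩ := mem_zpowers_iff.mp ht2
  obtain ⟨k, hk⟩ := Int.even_or_odd' m
  have hsq : (h ^ (-k) * t) ^ 2 = h ^ (m - 2 * k) := by
    rw [(hth.symm.zpow_left (-k)).mul_pow, ← hm, ← zpow_natCast, ← zpow_mul, ← zpow_add]
    congr 1
    ring
  refine ⟨h ^ (-k) * t, (mul_mem_cancel_left (zpow_mem_zpowers h _)).not.mpr ht,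
    ((Commute.refl h).zpow_left (-k)).mul_left hth, ?_⟩
  rcases hk with rfl | rfl
  · left
    rw [hsq, sub_self, zpow_zero]
  · right
    rw [hsq, add_sub_cancel_left, zpow_one]

theorem nonempty_mulEquiv_int_of_sq_eq {h g : G} (hidx : (zpowers h).index = 2)
    (hh : ¬IsOfFinOrder h) (hg : g ∉ zpowers h) (hgh : g ^ 2 = h) :
    Nonempty (G ≃* Multiplicative ℤ) := by
  have hsurj : Surjective (zpowersHom G g) := by
    refine MonoidHom.surjective_of_index_eq_two _ hidx ?_ ⟨ofAdd 1, by simp⟩ hg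
    rw [range_zpowersHom, zpowers_le, ← hgh]
    exact npow_mem_zpowers g 2
  have hg' : ¬IsOfFinOrder g := fun hfin => hh (hgh ▸ hfin.pow)
  exact ⟨(MulEquiv.ofBijective _ ⟨injective_zpowersHom hg', hsurj⟩).symm⟩

theorem nonempty_mulEquiv_int_prod_zmod_two {h u : G} (hidx : (zpowers h).index = 2)
    (hh : ¬IsOfFinOrder h) (hu : u ∉ zpowers h) (hhu : Commute h u) (hu2 : u ^ 2 = 1) :
    Nonempty (G ≃* Multiplicative (ℤ × ZMod 2)) := by
  let f := (zpowersHom G h).noncommCoprod (zmodTwoHom u hu2)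
    fun m e => (hhu.zpow_left _).pow_right _
  have hf (m : Multiplicative ℤ) (e : Multiplicative (ZMod 2)) :
      f (m, e) = zpowersHom G h m * zmodTwoHom u hu2 e := rfl
  have hinj : Injective f := by
    refine (injective_iff_map_eq_one f).mpr ?_
    rintro ⟨m, e⟩ hme
    rw [hf] at hme
    rcases e.eq_one_or_eq_ofAdd_one with rfl | rfl
    · rw [map_one, mul_one, map_eq_one_iff _ (injective_zpowersHom hh)] at hme
      rw [hme, Prod.mk_one_one]
    · rw [zmodTwoHom_ofAdd_one] at hme
      refine (hu ?_).elim
      rw [eq_inv_of_mul_eq_one_right hme]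
      exact inv_mem (zpow_mem_zpowers h _)
  have hsurj : Surjective f :=
    f.surjective_of_index_eq_two hidx (zpowers_le.mpr ⟨(ofAdd 1, 1), by simp [hf]⟩)
      ⟨(1, ofAdd 1), by simp [hf]⟩ hu
  exact ⟨(MulEquiv.ofBijective f ⟨hinj, hsurj⟩).symm.trans (MulEquiv.prodMultiplicative _ _).symm⟩

open DihedralGroup in
theorem nonempty_mulEquiv_dihedralGroup_zero {h t : G} (hidx : (zpowers h).index = 2)
    (hh : ¬IsOfFinOrder h) (ht : t ∉ zpowers h) (hth : t * h * t⁻¹ = h⁻¹) (ht2 : t ^ 2 = 1) :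
    Nonempty (G ≃* DihedralGroup 0) := by
  have htt : t * t = 1 := (sq t).symm.trans ht2
  have hth2 : (t * h) ^ 2 = 1 := by
    rw [inv_eq_of_mul_eq_one_right htt] at hth
    rw [sq, ← mul_assoc, hth, inv_mul_cancel]
  let f := liftOfInvolutions t (t * h) ht2 hth2
  have hr (i : ℤ) : f (r i) = h ^ i := by
    rw [liftOfInvolutions_r, ← mul_assoc, htt, one_mul]
  have hsr (i : ℤ) : f (sr i) = t * h ^ i := by
    rw [liftOfInvolutions_sr, ← mul_assoc, htt, one_mul]
  have hinj : Injective f := by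
    refine (injective_iff_map_eq_one f).mpr ?_
    rintro (i | i) hi <;> change ℤ at i
    · rw [hr, ← zpow_zero h] at hi
      rw [injective_zpow_iff_not_isOfFinOrder.mpr hh hi]
      rfl
    · rw [hsr] at hi
      refine (ht ?_).elim
      rw [eq_inv_of_mul_eq_one_left hi]
      exact inv_mem (zpow_mem_zpowers h _)
  have hsurj : Surjective f :=
    f.surjective_of_index_eq_two hidx (zpowers_le.mpr ⟨r 1, (hr 1).trans (zpow_one h)⟩)
      ⟨sr 0, (hsr 0).trans (by rw [zpow_zero, mul_one])⟩ ht
  exact ⟨(MulEquiv.ofBijective f ⟨hinj, hsurj⟩).symm⟩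

end IndexTwo

/-- A group containing an infinite cyclic subgroup of index 2 is isomorphic to `ℤ`,
`ℤ × ℤ/2`, or the free product `ℤ/2 * ℤ/2`. -/
theorem group_with_index_two_infinite_cyclic_subgroup (G : Type*) [Group G]
    (H : Subgroup G) (hidx : H.index = 2) (hZ : Nonempty (H ≃* Multiplicative ℤ)) :
    Nonempty (G ≃* Multiplicative ℤ) ∨
    Nonempty (G ≃* Multiplicative (ℤ × ZMod 2)) ∨
    Nonempty (G ≃* Monoid.Coprod (Multiplicative (ZMod 2)) (Multiplicative (ZMod 2))) := by
  obtain ⟨e⟩ := hZ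
  obtain ⟨h, rfl, hh⟩ := exists_zpowers_eq_of_mulEquiv_int e
  obtain ⟨t, ht, -⟩ := index_eq_two_iff_exists_notMem_and.mp hidx
  have := normal_of_index_eq_two hidx
  have ht2 : t ^ 2 ∈ zpowers h := sq_mem_of_index_two hidx t
  rcases conj_eq_self_or_inv hh t with hth | hth
  · obtain ⟨s, hs, hsh, hs2 | hs2⟩ :=
      exists_commute_sq_eq_one_or_self (mul_inv_eq_iff_eq_mul.mp hth) ht ht2
    · exact Or.inr (Or.inl (nonempty_mulEquiv_int_prod_zmod_two hidx hh hs hsh.symm hs2))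
    · exact Or.inl (nonempty_mulEquiv_int_of_sq_eq hidx hh hs hs2)
  · obtain ⟨φ⟩ := nonempty_mulEquiv_dihedralGroup_zero hidx hh ht hth
      (sq_eq_one_of_conj_eq_inv hh hth ht2)
    exact Or.inr (Or.inr ⟨φ.trans DihedralGroup.zeroMulEquivCoprod⟩)
end

section
/- Let G be a group, let t ∈ G be an element of infinite order (i.e., ¬ IsOfFinOrder t), and let x ∈ G satisfy x * t * x⁻¹ = t⁻¹ and x² ∈ ⟨t⟩, where ⟨t⟩ is the cyclic subgroup generated by t. Then x² = 1. -/
open Subgroup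

section

variable {G : Type*} [Group G] {t x y : G}

theorem conj_zpow_eq_zpow_neg_of_conj_eq_inv (hconj : x * t * x⁻¹ = t⁻¹) (k : ℤ) :
    x * t ^ k * x⁻¹ = t ^ (-k) := by
  rw [← conj_zpow, hconj, inv_zpow, zpow_neg]

/-- Conjugation by `x` both fixes and inverts `y`, and in an infinite cyclic group only `1` is
its own inverse. -/
theorem eq_one_of_mem_zpowers_of_commute_of_conj_eq_inv (ht : ¬IsOfFinOrder t)
    (hconj : x * t * x⁻¹ = t⁻¹) (hy : y ∈ zpowers t) (hcomm : Commute x y) : y = 1 := by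
  obtain ⟨k, rfl⟩ := hy
  have hneg : t ^ (-k) = t ^ k := by
    rw [← conj_zpow_eq_zpow_neg_of_conj_eq_inv hconj, hcomm.eq, mul_inv_cancel_right]
  have hk : -k = k := injective_zpow_iff_not_isOfFinOrder.mpr ht hneg
  simp [show k = 0 by omega]

end

/-- If `t` has infinite order, `x * t * x⁻¹ = t⁻¹` and `x²` is a power of `t`,
then `x² = 1`. -/
theorem sq_eq_one_of_conj_inv (G : Type*) [Group G] (t x : G)
    (ht : ¬ IsOfFinOrder t) (hconj : x * t * x⁻¹ = t⁻¹)
    (hx2 : x ^ 2 ∈ Subgroup.zpowers t) : x ^ 2 = 1 :=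
  eq_one_of_mem_zpowers_of_commute_of_conj_eq_inv ht hconj hx2 ((Commute.refl x).pow_right 2)
end
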